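/- The boundary maps of the box resolution are bounded with norm estimate ‖Ψ_q(X)‖² ≤ (k−q)(q+1)‖X‖² for all X ∈ 𝒜_q; in particular Ψ_q : 𝒜_q → 𝒜_{q+1} is a bounded linear operator. -/
import Mathlib


open scoped ENNReal

noncomputable section

/-- The box `ℬ^𝔟_𝔧 ⊆ ℕ^m`. -/
def Box (m : ℕ) (J : Finset (Fin m)) (b : Fin m → ℕ) : Set (Fin m → ℕ) :=
  {n | ∀ j ∈ J, n j ≤ b j}

/-- Given `k` boxes, the intersection box `ℬ^{𝔟_I}_{𝔧_I} = ⋂_{i ∈ I} ℬ^{𝔟_i}_{𝔧_i}`. -/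
def BoxI (m k : ℕ) (Js : Fin k → Finset (Fin m)) (bs : Fin k → Fin m → ℕ)
    (I : Finset (Fin k)) : Set (Fin m → ℕ) :=
  {n | ∀ i ∈ I, n ∈ Box m (Js i) (bs i)}

/-- Index set for `𝒜_q = ⊕_{|I| = q} ℋ^{𝔟_I}_{𝔧_I}`: pairs of a subset `I ⊆ {1,…,k}` of
size `q` and a multi-index in the intersection box `ℬ^{𝔟_I}_{𝔧_I}`. -/
def AIdx (m k : ℕ) (Js : Fin k → Finset (Fin m)) (bs : Fin k → Fin m → ℕ) (q : ℕ) :=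
  {p : Finset (Fin k) × (Fin m → ℕ) // p.1.card = q ∧ p.2 ∈ BoxI m k Js bs p.1}

/-- The Hilbert module `𝒜_q = ⊕_{|I| = q} ℋ^{𝔟_I}_{𝔧_I}` in the coordinates of its
orthonormal basis of normalized monomials. -/
abbrev AMod (m k : ℕ) (Js : Fin k → Finset (Fin m)) (bs : Fin k → Fin m → ℕ) (q : ℕ) :=
  lp (fun _ : AIdx m k Js bs q => ℂ) (2 : ℝ≥0∞)

/-- `sign(I, e)`: the number of elements of `I` strictly smaller than `e`. -/
def signIns {k : ℕ} (I : Finset (Fin k)) (e : Fin k) : ℕ :=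
  (I.filter (fun x => x < e)).card

section aux

variable {m k q : ℕ} {Js : Fin k → Finset (Fin m)} {bs : Fin k → Fin m → ℕ}

lemma erase_cond (p : AIdx m k Js bs (q + 1)) {e : Fin k} (he : e ∈ p.1.1) :
    (p.1.1.erase e).card = q ∧ p.1.2 ∈ BoxI m k Js bs (p.1.1.erase e) :=
  ⟨by rw [Finset.card_erase_of_mem he, p.2.1]; rfl,
   fun i hi => p.2.2 i (Finset.mem_of_mem_erase hi)⟩

/-- For `e ∈ I'`, the element of `AIdx q` obtained by erasing `e`. -/
def subIdx (p : AIdx m k Js bs (q + 1)) (e : Fin k) (he : e ∈ p.1.1) :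
    AIdx m k Js bs q :=
  ⟨(p.1.1.erase e, p.1.2), erase_cond p he⟩

lemma subIdx_injective (e : Fin k) :
    Function.Injective (fun p : {p : AIdx m k Js bs (q + 1) // e ∈ p.1.1} =>
      subIdx p.1 e p.2) := by
  intro a b h
  have h1 : (subIdx a.1 e a.2).1 = (subIdx b.1 e b.2).1 := congrArg _ h
  simp only [subIdx] at h1
  have h1' : (a.1.1.1.erase e) = (b.1.1.1.erase e) := congrArg Prod.fst h1
  have hI : a.1.1.1 = b.1.1.1 := by
    rw [← Finset.insert_erase a.2, ← Finset.insert_erase b.2, h1']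
  have hn := congrArg Prod.snd h1
  exact Subtype.ext (Subtype.ext (Prod.ext_iff.mpr ⟨hI, hn⟩))

lemma subIdx_not_mem (p : AIdx m k Js bs (q + 1)) (e : Fin k) (he : e ∈ p.1.1) :
    e ∉ (subIdx p e he).1.1 := Finset.notMem_erase e _

end aux

open scoped Classical in
/-- the boundary map `Ψ_q` of the box resolution, given coefficientwise on the
component `I'` (with `|I'| = q+1`) at `𝔫 ∈ ℬ^{𝔟_{I'}}_{𝔧_{I'}}` by
`Σ_{e ∈ I'} (−1)^{sign(I'∖{e}, e)} (X^{I'∖{e}})_𝔫`, sends `X ∈ 𝒜_q` to an element of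
`𝒜_{q+1}` of squared norm at most `(k−q)(q+1)‖X‖²`; in particular `Ψ_q` is bounded. -/
theorem psi_bounded (m k q : ℕ) (Js : Fin k → Finset (Fin m)) (bs : Fin k → Fin m → ℕ)
    (X : AMod m k Js bs q) :
    ∃ Y : AMod m k Js bs (q + 1),
      (∀ p : AIdx m k Js bs (q + 1),
        Y p = ∑ e ∈ p.1.1,
          (-1 : ℂ) ^ signIns (p.1.1.erase e) e *
            (if h : (p.1.1.erase e).card = q ∧ p.1.2 ∈ BoxI m k Js bs (p.1.1.erase e)
              then X (⟨(p.1.1.erase e, p.1.2), h⟩ : AIdx m k Js bs q) else 0)) ∧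
      ‖Y‖ ^ 2 ≤ ((k : ℝ) - q) * (q + 1) * ‖X‖ ^ 2 := by
  classical
  -- the coefficient function of `Y`
  set g : AIdx m k Js bs (q + 1) → ℂ := fun p => ∑ e ∈ p.1.1,
      (-1 : ℂ) ^ signIns (p.1.1.erase e) e *
        (if h : (p.1.1.erase e).card = q ∧ p.1.2 ∈ BoxI m k Js bs (p.1.1.erase e)
          then X (⟨(p.1.1.erase e, p.1.2), h⟩ : AIdx m k Js bs q) else 0) with hgdef
  have htR : (2 : ℝ≥0∞).toReal = 2 := by simp
  have hX2 : Summable fun p : AIdx m k Js bs q => ‖X p‖ ^ 2 := by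
    have := (lp.memℓp X).summable (p := 2) (by rw [htR]; norm_num)
    simpa [htR, Real.rpow_two] using this
  -- per-e summand functions
  set fE : Fin k → AIdx m k Js bs (q + 1) → ℝ := fun e p =>
      if h : e ∈ p.1.1 then ‖X (subIdx p e h)‖ ^ 2 else 0 with hfE
  set F : AIdx m k Js bs (q + 1) → ℝ := fun p => ∑ e : Fin k, fE e p with hF
  have hfE_nonneg : ∀ e p, 0 ≤ fE e p := by
    intro e p; simp only [hfE]; split <;> positivity
  have hF_nonneg : ∀ p, 0 ≤ F p := fun p => Finset.sum_nonneg fun e _ => hfE_nonneg e p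
  -- summability of each fE e
  have hfE_summable : ∀ e : Fin k, Summable (fE e) := by
    intro e
    have hsub : Summable ((fE e) ∘ (Subtype.val : {p : AIdx m k Js bs (q+1) // e ∈ p.1.1} → _)) := by
      have : ((fE e) ∘ (Subtype.val : {p : AIdx m k Js bs (q+1) // e ∈ p.1.1} → _))
          = fun p : {p : AIdx m k Js bs (q+1) // e ∈ p.1.1} =>
            ‖X (subIdx p.1 e p.2)‖ ^ 2 := by
        funext p; simp only [Function.comp, hfE, dif_pos p.2]
      rw [this]
      exact hX2.comp_injective (subIdx_injective e)
    have := (summable_subtype_iff_indicator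
      (s := {p : AIdx m k Js bs (q+1) | e ∈ p.1.1}) (f := fE e)).mp hsub
    have hind : Set.indicator {p : AIdx m k Js bs (q+1) | e ∈ p.1.1} (fE e) = fE e := by
      funext p
      by_cases h : p ∈ {p : AIdx m k Js bs (q+1) | e ∈ p.1.1}
      · exact Set.indicator_of_mem h _
      · have h' : ¬ e ∈ p.1.1 := h
        rw [Set.indicator_of_notMem h]
        simp only [hfE, dif_neg h']
    rwa [hind] at this
  have hF_summable : Summable F := by
    apply Summable.congr (summable_sum (fun e (_ : e ∈ Finset.univ) => hfE_summable e))
    intro p; rfl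
  -- pointwise Cauchy–Schwarz bound
  have hpt : ∀ p : AIdx m k Js bs (q + 1), ‖g p‖ ^ 2 ≤ ((q : ℝ) + 1) * F p := by
    intro p
    set t : Fin k → ℝ := fun e => ‖(if h : (p.1.1.erase e).card = q ∧
        p.1.2 ∈ BoxI m k Js bs (p.1.1.erase e)
          then X (⟨(p.1.1.erase e, p.1.2), h⟩ : AIdx m k Js bs q) else 0 : ℂ)‖ with ht
    have h1 : ‖g p‖ ≤ ∑ e ∈ p.1.1, t e := by
      refine (norm_sum_le _ _).trans (le_of_eq (Finset.sum_congr rfl fun e he => ?_))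
      rw [norm_mul, norm_pow, norm_neg, norm_one, one_pow, one_mul]
    have h2 : (∑ e ∈ p.1.1, t e) ^ 2 ≤ (p.1.1.card : ℝ) * ∑ e ∈ p.1.1, t e ^ 2 :=
      sq_sum_le_card_mul_sum_sq
    have h3 : (∑ e ∈ p.1.1, t e ^ 2) = F p := by
      have hFp : F p = ∑ e : Fin k, fE e p := rfl
      rw [hFp]
      rw [← Finset.sum_subset (Finset.subset_univ p.1.1)
        (fun e _ he => by simp only [hfE, dif_neg he])]
      refine Finset.sum_congr rfl fun e he => ?_
      simp only [ht, hfE]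
      rw [dif_pos he, dif_pos (erase_cond p he)]
      rfl
    have h0 : ‖g p‖ ^ 2 ≤ (∑ e ∈ p.1.1, t e) ^ 2 := by
      have hnn : (0:ℝ) ≤ ‖g p‖ := norm_nonneg _
      nlinarith [h1, hnn]
    calc ‖g p‖ ^ 2 ≤ (∑ e ∈ p.1.1, t e) ^ 2 := h0
      _ ≤ (p.1.1.card : ℝ) * ∑ e ∈ p.1.1, t e ^ 2 := h2
      _ = ((q : ℝ) + 1) * F p := by rw [h3, p.2.1]; push_cast; ring
  -- membership and construction of Y
  have hg2 : Summable fun p => ‖g p‖ ^ 2 :=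
    Summable.of_nonneg_of_le (fun p => by positivity) hpt (hF_summable.mul_left _)
  have hmem : Memℓp g 2 := memℓp_gen (by simpa [htR, Real.rpow_two] using hg2)
  refine ⟨⟨g, hmem⟩, fun p => rfl, ?_⟩
  -- norm computation
  have hYnorm : ‖(⟨g, hmem⟩ : AMod m k Js bs (q + 1))‖ ^ 2 = ∑' p, ‖g p‖ ^ 2 := by
    have := lp.norm_rpow_eq_tsum (p := 2) (by rw [htR]; norm_num)
      (⟨g, hmem⟩ : AMod m k Js bs (q + 1))
    simpa [htR, Real.rpow_two] using this
  have hXnorm : ‖X‖ ^ 2 = ∑' p, ‖X p‖ ^ 2 := by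
    have := lp.norm_rpow_eq_tsum (p := 2) (by rw [htR]; norm_num) X
    simpa [htR, Real.rpow_two] using this
  -- bound on tsum of fE e
  set hE : Fin k → AIdx m k Js bs q → ℝ := fun e p =>
    if e ∈ p.1.1 then 0 else ‖X p‖ ^ 2 with hhE
  have hhE_summable : ∀ e, Summable (hE e) := by
    intro e
    refine Summable.of_nonneg_of_le (fun p => ?_) (fun p => ?_) hX2
    · simp only [hhE]; split <;> positivity
    · simp only [hhE]; split
      · positivity
      · exact le_rfl
  have htfE : ∀ e : Fin k, ∑' p, fE e p ≤ ∑' p, hE e p := by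
    intro e
    have hind : Set.indicator {p : AIdx m k Js bs (q+1) | e ∈ p.1.1} (fE e) = fE e := by
      funext p
      by_cases h : p ∈ {p : AIdx m k Js bs (q+1) | e ∈ p.1.1}
      · exact Set.indicator_of_mem h _
      · have h' : ¬ e ∈ p.1.1 := h
        rw [Set.indicator_of_notMem h]
        simp only [hfE, dif_neg h']
    have h1 : ∑' p : {p : AIdx m k Js bs (q+1) | e ∈ p.1.1}, fE e p.1
        = ∑' p, fE e p := by
      refine tsum_subtype_eq_of_support_subset ?_
      intro p hp
      by_contra hc
      have hc' : ¬ e ∈ p.1.1 := hc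
      exact hp (by simp only [hfE, dif_neg hc'] : fE e p = 0)
    rw [← h1]
    refine Summable.tsum_le_tsum_of_inj (fun p => subIdx p.1 e p.2) (subIdx_injective e)
      (fun c _ => ?_) (fun p => ?_) ?_ (hhE_summable e)
    · simp only [hhE]; split <;> positivity
    · have hmem' : e ∈ (p : AIdx m k Js bs (q+1)).1.1 := p.2
      have hgoal : fE e p.1 = ‖X (subIdx p.1 e hmem')‖ ^ 2 := dif_pos hmem'
      rw [hgoal]
      have : hE e (subIdx p.1 e hmem') = ‖X (subIdx p.1 e hmem')‖ ^ 2 :=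
        if_neg (subIdx_not_mem p.1 e hmem')
      rw [this]
    · exact (hX2.comp_injective (subIdx_injective e)).congr
        (fun p => ((dif_pos p.2 : fE e p.1 = ‖X (subIdx p.1 e p.2)‖ ^ 2)).symm)
  -- sum over e of hE e
  have hsumhE : ∀ p : AIdx m k Js bs q, ∑ e : Fin k, hE e p = ((k : ℝ) - q) * ‖X p‖ ^ 2 := by
    intro p
    have hcard : p.1.1.card = q := p.2.1
    have hqk : q ≤ k := by
      rw [← hcard]
      simpa using Finset.card_le_card (Finset.subset_univ p.1.1)
    simp only [hhE]
    rw [Finset.sum_ite, Finset.sum_const_zero, zero_add, Finset.sum_const]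
    have hfilt : (Finset.univ.filter (fun e : Fin k => ¬ e ∈ p.1.1)).card = k - q := by
      rw [Finset.filter_not, Finset.filter_mem_eq_inter, Finset.univ_inter,
        Finset.card_sdiff_of_subset (Finset.subset_univ _), Finset.card_univ, Fintype.card_fin, hcard]
    rw [hfilt, nsmul_eq_mul, Nat.cast_sub hqk]
  -- assemble
  have hsum_q1F : Summable fun p => ((q : ℝ) + 1) * F p := hF_summable.mul_left _
  have step1 : ∑' p, ‖g p‖ ^ 2 ≤ ((q : ℝ) + 1) * ∑' p, F p := by
    rw [← tsum_mul_left]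
    exact Summable.tsum_le_tsum hpt hg2 hsum_q1F
  have step2 : ∑' p, F p = ∑ e : Fin k, ∑' p, fE e p := by
    rw [hF]
    exact Summable.tsum_finsetSum (fun e _ => hfE_summable e)
  have step3 : (∑ e : Fin k, ∑' p, fE e p) ≤ ∑ e : Fin k, ∑' p, hE e p :=
    Finset.sum_le_sum fun e _ => htfE e
  have step4 : (∑ e : Fin k, ∑' p, hE e p) = ((k : ℝ) - q) * ‖X‖ ^ 2 := by
    rw [← Summable.tsum_finsetSum (fun e _ => hhE_summable e)]
    rw [tsum_congr hsumhE, tsum_mul_left, ← hXnorm]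
  calc ‖(⟨g, hmem⟩ : AMod m k Js bs (q + 1))‖ ^ 2 = ∑' p, ‖g p‖ ^ 2 := hYnorm
    _ ≤ ((q : ℝ) + 1) * ∑' p, F p := step1
    _ = ((q : ℝ) + 1) * ∑ e : Fin k, ∑' p, fE e p := by rw [step2]
    _ ≤ ((q : ℝ) + 1) * ∑ e : Fin k, ∑' p, hE e p := by
        apply mul_le_mul_of_nonneg_left step3 (by positivity)
    _ = ((q : ℝ) + 1) * (((k : ℝ) - q) * ‖X‖ ^ 2) := by rw [step4]
    _ = ((k : ℝ) - q) * ((q : ℝ) + 1) * ‖X‖ ^ 2 := by ring
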